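/- Let p be a probability density on ℝ^d, v ∈ ℝ^d, and σ ∈ (0,1) with t := √(1−σ²). Then the noised tilted density satisfies the identity (p_v)_σ(x) = C · exp(⟨t^{−1}x, v⟩) · p_σ(x + t^{−1}σ²v) for some normalization constant C > 0 independent of x, where p_v(x) ∝ p(x)exp(⟨x,v⟩). -/

import Mathlib

open MeasureTheory
open scoped RealInnerProductSpace

/-- The linearly tilted density `p(·;v) ∝ p(·) exp⟨·,v⟩`. -/
noncomputable def tilt (d : ℕ) (p : EuclideanSpace ℝ (Fin d) → ℝ)
    (v : EuclideanSpace ℝ (Fin d)) (x : EuclideanSpace ℝ (Fin d)) : ℝ :=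
  p x * Real.exp ⟪x, v⟫ / ∫ y, p y * Real.exp ⟪y, v⟫

/-- The density of `√(1−σ²)·X + σ·Z` where `X ∼ q` and `Z ∼ N(0, I_d)`:
`q_σ(x) = (2πσ²)^{−d/2} t^{−d} ∫ q(t⁻¹ y) exp(−‖y−x‖²/(2σ²)) dy`, `t = √(1−σ²)`. -/
noncomputable def noised (d : ℕ) (q : EuclideanSpace ℝ (Fin d) → ℝ) (σ : ℝ)
    (x : EuclideanSpace ℝ (Fin d)) : ℝ :=
  (2 * Real.pi * σ ^ 2) ^ (-(d : ℝ) / 2) * Real.sqrt (1 - σ ^ 2) ^ (-(d : ℝ)) *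
    ∫ y, q ((Real.sqrt (1 - σ ^ 2))⁻¹ • y) * Real.exp (-‖y - x‖ ^ 2 / (2 * σ ^ 2))

/-!
Tilting by `exp ⟪·, v⟫` and noising commute up to a shift: in the integral defining `noised`
the tilt contributes the factor `exp ⟪t⁻¹ • y, v⟫`, and completing the square
turns `exp (⟪t⁻¹ • y, v⟫ - ‖y - x‖² / 2σ²)` into a factor independent of `y` times a Gaussian
centred at `x + (t⁻¹ σ²) • v`. The normalisation of the tilt only contributes a positive constant.
-/

section CompleteSquare

variable {E : Type*} [NormedAddCommGroup E] [InnerProductSpace ℝ E]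

theorem inner_smul_sub_norm_sub_sq_div_eq (a σ : ℝ) (hσ : σ ≠ 0) (x y v : E) :
    ⟪a • y, v⟫ + -‖y - x‖ ^ 2 / (2 * σ ^ 2) =
      a ^ 2 * σ ^ 2 * ‖v‖ ^ 2 / 2 + ⟪a • x, v⟫ +
        -‖y - (x + (a * σ ^ 2) • v)‖ ^ 2 / (2 * σ ^ 2) := by
  have hshift : ‖y - (x + (a * σ ^ 2) • v)‖ ^ 2 =
      ‖y - x‖ ^ 2 - 2 * (a * σ ^ 2 * (⟪y, v⟫ - ⟪x, v⟫)) + (a * σ ^ 2) ^ 2 * ‖v‖ ^ 2 := by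
    rw [show y - (x + (a * σ ^ 2) • v) = (y - x) - (a * σ ^ 2) • v by abel, norm_sub_sq_real,
      real_inner_smul_right, inner_sub_left, norm_smul, mul_pow, Real.norm_eq_abs, sq_abs]
  rw [hshift, real_inner_smul_left, real_inner_smul_left]
  field_simp
  ring

theorem exp_inner_smul_mul_exp_neg_norm_sub_sq (a σ : ℝ) (hσ : σ ≠ 0) (x y v : E) :
    Real.exp ⟪a • y, v⟫ * Real.exp (-‖y - x‖ ^ 2 / (2 * σ ^ 2)) =
      Real.exp (a ^ 2 * σ ^ 2 * ‖v‖ ^ 2 / 2) * Real.exp ⟪a • x, v⟫ *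
        Real.exp (-‖y - (x + (a * σ ^ 2) • v)‖ ^ 2 / (2 * σ ^ 2)) := by
  rw [← Real.exp_add, ← Real.exp_add, ← Real.exp_add,
    inner_smul_sub_norm_sub_sq_div_eq a σ hσ]

end CompleteSquare

theorem integral_mul_pos_of_integral_pos {α : Type*} [MeasurableSpace α] {μ : Measure α}
    {f g : α → ℝ} (hf : 0 ≤ f) (hf_pos : 0 < ∫ x, f x ∂μ) (hg : ∀ x, 0 < g x)
    (hfg : Integrable (fun x => f x * g x) μ) : 0 < ∫ x, f x * g x ∂μ := by
  have hf_int : Integrable f μ := by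
    by_contra h
    rw [integral_undef h] at hf_pos
    exact lt_irrefl 0 hf_pos
  have hsupp : Function.support (fun x => f x * g x) = Function.support f := by
    ext x
    simp [Function.mem_support, (hg x).ne']
  rw [integral_pos_iff_support_of_nonneg (fun x => mul_nonneg (hf x) (hg x).le) hfg, hsupp]
  exact (integral_pos_iff_support_of_nonneg hf hf_int).mp hf_pos

section Noised

variable {d : ℕ}

theorem noised_div_const (q : EuclideanSpace ℝ (Fin d) → ℝ) (c σ : ℝ)
    (x : EuclideanSpace ℝ (Fin d)) :
    noised d (fun y => q y / c) σ x = noised d q σ x / c := by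
  unfold noised
  rw [mul_div_assoc, ← integral_div]
  simp only [div_mul_eq_mul_div]

theorem noised_mul_exp_inner (q : EuclideanSpace ℝ (Fin d) → ℝ) (v : EuclideanSpace ℝ (Fin d))
    {σ : ℝ} (hσ : σ ≠ 0) (x : EuclideanSpace ℝ (Fin d)) :
    noised d (fun y => q y * Real.exp ⟪y, v⟫) σ x =
      Real.exp ((Real.sqrt (1 - σ ^ 2))⁻¹ ^ 2 * σ ^ 2 * ‖v‖ ^ 2 / 2) *
        Real.exp ⟪(Real.sqrt (1 - σ ^ 2))⁻¹ • x, v⟫ *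
          noised d q σ (x + ((Real.sqrt (1 - σ ^ 2))⁻¹ * σ ^ 2) • v) := by
  unfold noised
  simp only [mul_assoc, exp_inner_smul_mul_exp_neg_norm_sub_sq _ σ hσ x]
  simp only [mul_left_comm (q _), integral_const_mul]
  ring

end Noised

theorem stmt1 (d : ℕ) (p : EuclideanSpace ℝ (Fin d) → ℝ)
    (v : EuclideanSpace ℝ (Fin d))
    (hp_nonneg : ∀ x, 0 ≤ p x) (hp_int : ∫ x, p x = 1)
    (hp_tilt : Integrable (fun x => p x * Real.exp ⟪x, v⟫))
    (σ : ℝ) (hσ : σ ∈ Set.Ioo (0 : ℝ) 1) :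
    ∃ C : ℝ, 0 < C ∧ ∀ x : EuclideanSpace ℝ (Fin d),
      noised d (tilt d p v) σ x =
        C * Real.exp ⟪(Real.sqrt (1 - σ ^ 2))⁻¹ • x, v⟫ *
          noised d p σ (x + ((Real.sqrt (1 - σ ^ 2))⁻¹ * σ ^ 2) • v) := by
  have hZ : 0 < ∫ y, p y * Real.exp ⟪y, v⟫ :=
    integral_mul_pos_of_integral_pos hp_nonneg (by rw [hp_int]; exact one_pos)
      (fun _ => Real.exp_pos _) hp_tilt
  refine ⟨Real.exp ((Real.sqrt (1 - σ ^ 2))⁻¹ ^ 2 * σ ^ 2 * ‖v‖ ^ 2 / 2) /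
    ∫ y, p y * Real.exp ⟪y, v⟫, by positivity, fun x => ?_⟩
  delta tilt
  rw [noised_div_const, noised_mul_exp_inner p v hσ.1.ne' x]
  ring
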